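/- Under hypotheses (γ), (φ_hyp), and (F3), and with F continuous in (x₁,x₂), fix δ ∈ (0,1) as in (F3). Then there exist r₀ ∈ (0,1) and ε > 0 such that for every u = (u₁,u₂) ∈ E with ‖u₁‖_∞ + ‖u₂‖_∞ = δ, the functional φ(u) = ∑_{t=1}^T [ γ₁(t)Φ₁(Δu₁(t)) + γ₂(t)Φ₂(Δu₂(t)) + γ₃(t)Φ₃(u₁(t)) + γ₄(t)Φ₄(u₂(t)) − F(t,u₁(t),u₂(t)) ] satisfies φ(r₀u) ≤ −ε. -/

import Mathlib

/-! On the scaled sphere `r • u`, `‖u₁‖_∞ + ‖u₂‖_∞ = δ < 1`, every argument of the `Φᵢ` has norm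
at most `2 r` (differences are bounded by twice the sup norm, using periodicity at `t = T`), so
the `Φ`-part of `φ(r u)` is `O(r ^ min q p)` uniformly in `u`. On the other hand the larger of the
two sup norms is at least `δ / 2`, so (F3) at a point where it is attained makes `∑ F` at least
`c r ^ max β₁ β₂`. Since `max β₁ β₂ < min q p`, the `F`-term dominates for small `r`. -/

noncomputable section

abbrev Rn (N : ℕ) := EuclideanSpace ℝ (Fin N)

/-- `u : ℤ → ℝ^N` is `T`-periodic. -/
def IsPeriodic (N : ℕ) (T : ℕ) (u : ℤ → Rn N) : Prop := ∀ t : ℤ, u (t + T) = u t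

/-- Forward difference. -/
def fdiff (N : ℕ) (u : ℤ → Rn N) (t : ℤ) : Rn N := u (t + 1) - u t

/-- `‖w‖_∞ = max_{t∈ℤ[1,T]} |w(t)|` (for `T ≥ 1`). -/
def supNorm (N T : ℕ) (hT : 1 ≤ T) (w : ℤ → Rn N) : ℝ :=
  (Finset.Icc (1 : ℤ) (T : ℤ)).sup'
    (Finset.nonempty_Icc.mpr (by exact_mod_cast hT)) (fun t => ‖w t‖)

/-- The action functional of Theorem 1.2. -/
def phiFun (N T : ℕ) (γ : Fin 4 → ℤ → ℝ) (Φv : Fin 4 → Rn N → ℝ)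
    (F : ℤ → Rn N → Rn N → ℝ) (u : (ℤ → Rn N) × (ℤ → Rn N)) : ℝ :=
  ∑ t ∈ Finset.Icc (1 : ℤ) (T : ℤ),
    (γ 0 t * Φv 0 (fdiff N u.1 t) + γ 1 t * Φv 1 (fdiff N u.2 t)
      + γ 2 t * Φv 2 (u.1 t) + γ 3 t * Φv 3 (u.2 t) - F t (u.1 t) (u.2 t))

open Finset Filter Topology

section SupNorm

variable {N T : ℕ} (hT : 1 ≤ T) {w : ℤ → Rn N} {t : ℤ}

lemma norm_le_supNorm (ht : t ∈ Icc (1 : ℤ) T) : ‖w t‖ ≤ supNorm N T hT w :=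
  le_sup' (fun s => ‖w s‖) ht

lemma supNorm_nonneg : 0 ≤ supNorm N T hT w :=
  (norm_nonneg _).trans (norm_le_supNorm hT (t := 1) (by simp [hT]))

lemma exists_norm_eq_supNorm : ∃ t ∈ Icc (1 : ℤ) T, ‖w t‖ = supNorm N T hT w := by
  obtain ⟨t, ht, h⟩ := exists_mem_eq_sup' _ (fun s => ‖w s‖)
  exact ⟨t, ht, h.symm⟩

lemma norm_succ_le_supNorm (hw : IsPeriodic N T w) (ht : t ∈ Icc (1 : ℤ) T) :
    ‖w (t + 1)‖ ≤ supNorm N T hT w := by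
  rcases (mem_Icc.1 ht).2.lt_or_eq with hlt | rfl
  · exact norm_le_supNorm hT (mem_Icc.2 ⟨by linarith [(mem_Icc.1 ht).1], hlt⟩)
  · rw [add_comm, hw 1]
    exact norm_le_supNorm hT (by simp [hT])

lemma norm_fdiff_le_two_mul_supNorm (hw : IsPeriodic N T w) (ht : t ∈ Icc (1 : ℤ) T) :
    ‖fdiff N w t‖ ≤ 2 * supNorm N T hT w := by
  calc ‖fdiff N w t‖ ≤ ‖w (t + 1)‖ + ‖w t‖ := norm_sub_le _ _
    _ ≤ 2 * supNorm N T hT w := by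
      linarith [norm_succ_le_supNorm hT hw ht, norm_le_supNorm hT (w := w) ht]

end SupNorm

lemma fdiff_smul {N : ℕ} (r : ℝ) (w : ℤ → Rn N) : fdiff N (r • w) = r • fdiff N w := by
  ext1 t
  simp only [fdiff, Pi.smul_apply, smul_sub]

section Scaling

variable {E : Type*} [SeminormedAddCommGroup E] [NormedSpace ℝ E] {r : ℝ} {x : E}

lemma norm_smul_rpow_le {a e m : ℝ} (hr0 : 0 ≤ r) (hr1 : r ≤ 1) (hxa : ‖x‖ ≤ a)
    (hm : 0 ≤ m) (hme : m ≤ e) : ‖r • x‖ ^ e ≤ a ^ e * r ^ m := by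
  have ha : 0 ≤ a := (norm_nonneg x).trans hxa
  rw [norm_smul, Real.norm_of_nonneg hr0, Real.mul_rpow hr0 (norm_nonneg x), mul_comm]
  exact mul_le_mul (Real.rpow_le_rpow (norm_nonneg x) hxa (hm.trans hme))
    (Real.rpow_le_rpow_of_exponent_ge' hr0 hr1 hm hme) (by positivity) (by positivity)

lemma rpow_mul_rpow_le_norm_smul_rpow {a β₀ β : ℝ} (hr0 : 0 ≤ r) (hr1 : r ≤ 1) (ha : 0 ≤ a)
    (hax : a ≤ ‖x‖) (hβ₀ : 0 ≤ β₀) (hβ : β₀ ≤ β) : a ^ β₀ * r ^ β ≤ ‖r • x‖ ^ β₀ := by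
  rw [norm_smul, Real.norm_of_nonneg hr0, Real.mul_rpow hr0 (norm_nonneg x), mul_comm (r ^ β₀)]
  exact mul_le_mul (Real.rpow_le_rpow ha hax hβ₀)
    (Real.rpow_le_rpow_of_exponent_ge' hr0 hr1 hβ₀ hβ) (by positivity) (by positivity)

lemma mul_apply_smul_le {Φ : E → ℝ} {γ G b e m a : ℝ} (hΦ0 : ∀ y, 0 ≤ Φ y)
    (hΦ : ∀ y, Φ y ≤ b * ‖y‖ ^ e) (hb : 0 ≤ b) (hγ : 0 ≤ γ) (hγG : γ ≤ G)
    (hr0 : 0 ≤ r) (hr1 : r ≤ 1) (hxa : ‖x‖ ≤ a) (hm : 0 ≤ m) (hme : m ≤ e) :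
    γ * Φ (r • x) ≤ G * b * a ^ e * r ^ m :=
  calc γ * Φ (r • x) ≤ G * (b * ‖r • x‖ ^ e) := mul_le_mul hγG (hΦ _) (hΦ0 _) (hγ.trans hγG)
    _ ≤ G * (b * (a ^ e * r ^ m)) := by
      gcongr
      · exact hγ.trans hγG
      · exact norm_smul_rpow_le hr0 hr1 hxa hm hme
    _ = G * b * a ^ e * r ^ m := by ring

end Scaling

lemma exists_mul_rpow_le_mul_rpow (C : ℝ) {c β m : ℝ} (hc : 0 < c) (hβm : β < m) :
    ∃ r, 0 < r ∧ r < 1 ∧ C * r ^ m ≤ c * r ^ β := by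
  have hd : 0 < m - β := sub_pos.2 hβm
  have hlim : Tendsto (fun r : ℝ => C * r ^ (m - β)) (𝓝[>] 0) (𝓝 0) := by
    have := ((Real.continuousAt_rpow_const 0 (m - β) (Or.inr hd.le)).tendsto).const_mul C
    simpa [Real.zero_rpow hd.ne'] using this.mono_left nhdsWithin_le_nhds
  obtain ⟨r, ⟨hr0, hr1⟩, hrC⟩ :=
    (Eventually.and (Ioo_mem_nhdsGT one_pos) (hlim.eventually (eventually_le_nhds hc))).exists
  refine ⟨r, hr0, hr1, ?_⟩
  calc C * r ^ m = C * r ^ (m - β) * r ^ β := by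
        rw [mul_assoc, ← Real.rpow_add hr0, sub_add_cancel]
    _ ≤ c * r ^ β := mul_le_mul_of_nonneg_right hrC (by positivity)

section Functional

variable {N T : ℕ} (γ : Fin 4 → ℤ → ℝ) (Φv : Fin 4 → Rn N → ℝ)

def phiFunPrincipal (v : (ℤ → Rn N) × (ℤ → Rn N)) (t : ℤ) : ℝ :=
  γ 0 t * Φv 0 (fdiff N v.1 t) + γ 1 t * Φv 1 (fdiff N v.2 t)
    + γ 2 t * Φv 2 (v.1 t) + γ 3 t * Φv 3 (v.2 t)

variable {γ Φv}

lemma phiFun_le_of_forall_le (F : ℤ → Rn N → Rn N → ℝ) {v : (ℤ → Rn N) × (ℤ → Rn N)} {K : ℝ}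
    (hK : ∀ t ∈ Icc (1 : ℤ) T, phiFunPrincipal γ Φv v t ≤ K) :
    phiFun N T γ Φv F v ≤ T * K - ∑ t ∈ Icc (1 : ℤ) T, F t (v.1 t) (v.2 t) :=
  calc phiFun N T γ Φv F v ≤ ∑ t ∈ Icc (1 : ℤ) T, (K - F t (v.1 t) (v.2 t)) :=
        sum_le_sum fun t ht => sub_le_sub_right (hK t ht) _
    _ = T * K - ∑ t ∈ Icc (1 : ℤ) T, F t (v.1 t) (v.2 t) := by
        simp [sum_sub_distrib]

lemma phiFunPrincipal_smul_le (hT : 1 ≤ T) {b e G : Fin 4 → ℝ} {m r : ℝ}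
    (hγ : ∀ i, ∀ t ∈ Icc (1 : ℤ) T, 0 ≤ γ i t) (hγG : ∀ i, ∀ t ∈ Icc (1 : ℤ) T, γ i t ≤ G i)
    (hΦ0 : ∀ i x, 0 ≤ Φv i x) (hΦ : ∀ i x, Φv i x ≤ b i * ‖x‖ ^ e i) (hb : ∀ i, 0 ≤ b i)
    (hm : 0 ≤ m) (hme : ∀ i, m ≤ e i) (hr0 : 0 ≤ r) (hr1 : r ≤ 1)
    {u : (ℤ → Rn N) × (ℤ → Rn N)} (hu₁ : IsPeriodic N T u.1) (hu₂ : IsPeriodic N T u.2)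
    (h₁ : supNorm N T hT u.1 ≤ 1) (h₂ : supNorm N T hT u.2 ≤ 1) :
    ∀ t ∈ Icc (1 : ℤ) T,
      phiFunPrincipal γ Φv (r • u) t ≤ (∑ i, G i * b i * 2 ^ e i) * r ^ m := by
  intro t ht
  have hw : ∀ w, IsPeriodic N T w → supNorm N T hT w ≤ 1 → ‖fdiff N w t‖ ≤ 2 ∧ ‖w t‖ ≤ 2 :=
    fun w hw h => ⟨by linarith [norm_fdiff_le_two_mul_supNorm hT hw ht],
      by linarith [norm_le_supNorm hT (w := w) ht]⟩
  have term : ∀ i (x : Rn N), ‖x‖ ≤ 2 → γ i t * Φv i (r • x) ≤ G i * b i * 2 ^ e i * r ^ m :=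
    fun i x hx => mul_apply_smul_le (hΦ0 i) (hΦ i) (hb i) (hγ i t ht) (hγG i t ht) hr0 hr1 hx hm
      (hme i)
  simp only [phiFunPrincipal, Prod.smul_fst, Prod.smul_snd, fdiff_smul, Pi.smul_apply,
    Fin.sum_univ_four]
  linarith [term 0 _ (hw u.1 hu₁ h₁).1, term 1 _ (hw u.2 hu₂ h₂).1, term 2 _ (hw u.1 hu₁ h₁).2,
    term 3 _ (hw u.2 hu₂ h₂).2]

end Functional

lemma exists_rpow_mul_le_norm_smul_rpow {N T : ℕ} (hT : 1 ≤ T) {w : ℤ → Rn N} {a β₀ β r : ℝ}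
    (hr0 : 0 ≤ r) (hr1 : r ≤ 1) (ha : 0 ≤ a) (haw : a ≤ supNorm N T hT w) (hβ₀ : 0 ≤ β₀)
    (hβ : β₀ ≤ β) : ∃ t ∈ Icc (1 : ℤ) T, a ^ β₀ * r ^ β ≤ ‖r • w t‖ ^ β₀ :=
  let ⟨t, ht, heq⟩ := exists_norm_eq_supNorm hT (w := w)
  ⟨t, ht, rpow_mul_rpow_le_norm_smul_rpow hr0 hr1 ha (heq ▸ haw) hβ₀ hβ⟩

lemma le_sum_nonlinearity_smul {N T : ℕ} (hT : 1 ≤ T) {F : ℤ → Rn N → Rn N → ℝ}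
    {β₁ β₂ M₁ M₂ δ r : ℝ}
    (hβ₁ : 0 ≤ β₁) (hβ₂ : 0 ≤ β₂) (hM₁ : 0 ≤ M₁) (hM₂ : 0 ≤ M₂) (hδ : 0 < δ)
    (hF3 : ∀ t ∈ Icc (1 : ℤ) T, ∀ x₁ x₂ : Rn N, ‖x₁‖ < δ → ‖x₂‖ < δ →
      M₁ * ‖x₁‖ ^ β₁ + M₂ * ‖x₂‖ ^ β₂ ≤ F t x₁ x₂)
    (hr0 : 0 ≤ r) (hr1 : r < 1) {u : (ℤ → Rn N) × (ℤ → Rn N)}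
    (hu : supNorm N T hT u.1 + supNorm N T hT u.2 = δ) :
    min (M₁ * (δ / 2) ^ β₁) (M₂ * (δ / 2) ^ β₂) * r ^ max β₁ β₂
      ≤ ∑ t ∈ Icc (1 : ℤ) T, F t ((r • u).1 t) ((r • u).2 t) := by
  have hsmall : ∀ w : ℤ → Rn N, supNorm N T hT w ≤ δ →
      ∀ t ∈ Icc (1 : ℤ) T, ‖r • w t‖ < δ := by
    intro w hw t ht
    rw [norm_smul, Real.norm_of_nonneg hr0]
    calc r * ‖w t‖ ≤ r * δ := by gcongr; exact (norm_le_supNorm hT ht).trans hw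
      _ < δ := mul_lt_of_lt_one_left hδ hr1
  have hF : ∀ t ∈ Icc (1 : ℤ) T, M₁ * ‖r • u.1 t‖ ^ β₁ + M₂ * ‖r • u.2 t‖ ^ β₂
      ≤ F t (r • u.1 t) (r • u.2 t) := fun t ht =>
    hF3 t ht _ _ (hsmall u.1 (by linarith [supNorm_nonneg hT (w := u.2)]) t ht)
      (hsmall u.2 (by linarith [supNorm_nonneg hT (w := u.1)]) t ht)
  have hF0 : ∀ t ∈ Icc (1 : ℤ) T, 0 ≤ F t (r • u.1 t) (r • u.2 t) :=
    fun t ht => le_trans (by positivity) (hF t ht)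
  suffices ∃ t ∈ Icc (1 : ℤ) T,
      min (M₁ * (δ / 2) ^ β₁) (M₂ * (δ / 2) ^ β₂) * r ^ max β₁ β₂ ≤ F t (r • u.1 t) (r • u.2 t)
    from this.elim fun t ⟨ht, h⟩ => h.trans (single_le_sum hF0 ht)
  have hδ2 : 0 ≤ δ / 2 := by positivity
  rcases le_or_gt (δ / 2) (supNorm N T hT u.1) with h | h
  · obtain ⟨t, ht, hrt⟩ :=
      exists_rpow_mul_le_norm_smul_rpow hT hr0 hr1.le hδ2 h hβ₁ (le_max_left β₁ β₂)
    refine ⟨t, ht, ?_⟩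
    calc _ ≤ M₁ * ((δ / 2) ^ β₁ * r ^ max β₁ β₂) := by
          rw [← mul_assoc]; gcongr; exact min_le_left _ _
      _ ≤ F t (r • u.1 t) (r • u.2 t) := by
          linarith [hF t ht, mul_le_mul_of_nonneg_left hrt hM₁,
            (by positivity : 0 ≤ M₂ * ‖r • u.2 t‖ ^ β₂)]
  · obtain ⟨t, ht, hrt⟩ := exists_rpow_mul_le_norm_smul_rpow hT hr0 hr1.le hδ2
      (by linarith : δ / 2 ≤ supNorm N T hT u.2) hβ₂ (le_max_right β₁ β₂)
    refine ⟨t, ht, ?_⟩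
    calc _ ≤ M₂ * ((δ / 2) ^ β₂ * r ^ max β₁ β₂) := by
          rw [← mul_assoc]; gcongr; exact min_le_right _ _
      _ ≤ F t (r • u.1 t) (r • u.2 t) := by
          linarith [hF t ht, mul_le_mul_of_nonneg_left hrt hM₂,
            (by positivity : 0 ≤ M₁ * ‖r • u.1 t‖ ^ β₁)]

theorem phi_negative_on_small_sphere_general (T N : ℕ) (hT : 1 < T)
    (γ : Fin 4 → ℤ → ℝ) (Φv : Fin 4 → Rn N → ℝ)
    (F : ℤ → Rn N → Rn N → ℝ)
    (p q : ℝ) (a b : Fin 4 → ℝ)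
    (hp : 1 < p) (hq : 1 < q) (hb : ∀ i, 0 < b i)
    -- hypothesis (γ)
    (hγpos : ∀ i, ∀ t ∈ Finset.Icc (1 : ℤ) (T : ℤ), 0 < γ i t)
    -- hypothesis (φ_hyp)
    (hΦnonneg : ∀ i, ∀ x : Rn N, 0 ≤ Φv i x)
    (hΦq : ∀ i ∈ ({0, 2} : Set (Fin 4)), ∀ x : Rn N,
      a i * ‖x‖ ^ q ≤ Φv i x ∧ Φv i x ≤ b i * ‖x‖ ^ q)
    (hΦp : ∀ i ∈ ({1, 3} : Set (Fin 4)), ∀ x : Rn N,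
      a i * ‖x‖ ^ p ≤ Φv i x ∧ Φv i x ≤ b i * ‖x‖ ^ p)
    -- hypothesis (F3)
    (β₁ β₂ M₁ M₂ δ : ℝ)
    (hβ₁ : 1 < β₁ ∧ β₁ < min q p) (hβ₂ : 1 < β₂ ∧ β₂ < min q p)
    (hM₁ : 0 < M₁) (hM₂ : 0 < M₂) (hδ : 0 < δ ∧ δ < 1)
    (hF3 : ∀ t ∈ Finset.Icc (1 : ℤ) (T : ℤ), ∀ x₁ x₂ : Rn N,
      ‖x₁‖ < δ → ‖x₂‖ < δ →
        M₁ * ‖x₁‖ ^ β₁ + M₂ * ‖x₂‖ ^ β₂ ≤ F t x₁ x₂) :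
    ∃ r₀ : ℝ, 0 < r₀ ∧ r₀ < 1 ∧ ∃ ε : ℝ, 0 < ε ∧
      ∀ u : (ℤ → Rn N) × (ℤ → Rn N), IsPeriodic N T u.1 → IsPeriodic N T u.2 →
        supNorm N T hT.le u.1 + supNorm N T hT.le u.2 = δ →
          phiFun N T γ Φv F (r₀ • u) ≤ -ε := by
  obtain ⟨hδ0, hδ1⟩ := hδ
  set e : Fin 4 → ℝ := ![q, p, q, p]
  have hΦ : ∀ i x, Φv i x ≤ b i * ‖x‖ ^ e i := by
    intro i x
    fin_cases i
    exacts [(hΦq 0 (by simp) x).2, (hΦp 1 (by simp) x).2, (hΦq 2 (by simp) x).2,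
      (hΦp 3 (by simp) x).2]
  have hme : ∀ i, min q p ≤ e i := by intro i; fin_cases i <;> simp [e]
  set C := ∑ i, (∑ t ∈ Icc (1 : ℤ) T, γ i t) * b i * 2 ^ e i
  set c := min (M₁ * (δ / 2) ^ β₁) (M₂ * (δ / 2) ^ β₂)
  have hc : 0 < c := lt_min (by positivity) (by positivity)
  obtain ⟨r, hr0, hr1, hr⟩ :=
    exists_mul_rpow_le_mul_rpow (T * C) (half_pos hc) (max_lt hβ₁.2 hβ₂.2)
  refine ⟨r, hr0, hr1, c / 2 * r ^ max β₁ β₂, by positivity, fun u hu₁ hu₂ hu => ?_⟩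
  have hγ : ∀ i, ∀ t ∈ Icc (1 : ℤ) T, 0 ≤ γ i t := fun i t ht => (hγpos i t ht).le
  have hprincipal := phiFunPrincipal_smul_le hT.le hγ (fun i t ht => single_le_sum (hγ i) ht)
    hΦnonneg hΦ (fun i => (hb i).le) (le_min (by linarith) (by linarith)) hme hr0.le hr1.le
    hu₁ hu₂ (by linarith [supNorm_nonneg hT.le (w := u.2)])
    (by linarith [supNorm_nonneg hT.le (w := u.1)])
  have hF := le_sum_nonlinearity_smul hT.le (by linarith) (by linarith) hM₁.le hM₂.le hδ0 hF3
    hr0.le hr1 hu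
  calc phiFun N T γ Φv F (r • u)
      ≤ T * (C * r ^ min q p) - ∑ t ∈ Icc (1 : ℤ) T, F t ((r • u).1 t) ((r • u).2 t) :=
        phiFun_le_of_forall_le F hprincipal
    _ ≤ -(c / 2 * r ^ max β₁ β₂) := by linarith

theorem phi_negative_on_small_sphere (T N : ℕ) (hT : 1 < T)
    (γ : Fin 4 → ℤ → ℝ) (φv : Fin 4 → Rn N → Rn N) (Φv : Fin 4 → Rn N → ℝ)
    (F : ℤ → Rn N → Rn N → ℝ)
    (p q : ℝ) (a b : Fin 4 → ℝ)
    (hp : 1 < p) (hq : 1 < q) (ha : ∀ i, 0 < a i) (hb : ∀ i, 0 < b i)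
    -- hypothesis (γ)
    (hγper : ∀ i, ∀ t : ℤ, γ i (t + T) = γ i t)
    (hγpos : ∀ i, ∀ t ∈ Finset.Icc (1 : ℤ) (T : ℤ), 0 < γ i t)
    -- hypothesis (φ_hyp)
    (hφgrad : ∀ i, ∀ x : Rn N, φv i x = gradient (Φv i) x)
    (hΦnonneg : ∀ i, ∀ x : Rn N, 0 ≤ Φv i x)
    (hΦq : ∀ i ∈ ({0, 2} : Set (Fin 4)), ∀ x : Rn N,
      a i * ‖x‖ ^ q ≤ Φv i x ∧ Φv i x ≤ b i * ‖x‖ ^ q)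
    (hΦp : ∀ i ∈ ({1, 3} : Set (Fin 4)), ∀ x : Rn N,
      a i * ‖x‖ ^ p ≤ Φv i x ∧ Φv i x ≤ b i * ‖x‖ ^ p)
    -- `F` continuous in `(x₁,x₂)`
    (hFcont : ∀ t : ℤ, Continuous (fun pt : Rn N × Rn N => F t pt.1 pt.2))
    -- hypothesis (F3)
    (β₁ β₂ M₁ M₂ δ : ℝ)
    (hβ₁ : 1 < β₁ ∧ β₁ < min q p) (hβ₂ : 1 < β₂ ∧ β₂ < min q p)
    (hM₁ : 0 < M₁) (hM₂ : 0 < M₂) (hδ : 0 < δ ∧ δ < 1)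
    (hF3 : ∀ t ∈ Finset.Icc (1 : ℤ) (T : ℤ), ∀ x₁ x₂ : Rn N,
      ‖x₁‖ < δ → ‖x₂‖ < δ →
        M₁ * ‖x₁‖ ^ β₁ + M₂ * ‖x₂‖ ^ β₂ ≤ F t x₁ x₂) :
    ∃ r₀ : ℝ, 0 < r₀ ∧ r₀ < 1 ∧ ∃ ε : ℝ, 0 < ε ∧
      ∀ u : (ℤ → Rn N) × (ℤ → Rn N), IsPeriodic N T u.1 → IsPeriodic N T u.2 →
        supNorm N T hT.le u.1 + supNorm N T hT.le u.2 = δ →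
          phiFun N T γ Φv F (r₀ • u) ≤ -ε :=
  phi_negative_on_small_sphere_general T N hT γ Φv F p q a b hp hq hb hγpos hΦnonneg hΦq hΦp β₁ β₂
    M₁ M₂ δ hβ₁ hβ₂ hM₁ hM₂ hδ hF3
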